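/- Let I be an ideal of C(X), and let X∖⋂Z[I] be infinite. Then in C(X) with the m^I-topology, every compact subset has empty interior; conversely, if every compact subset of C(X) with the m^I-topology has empty interior, then X∖⋂Z[I] is infinite. -/

import Mathlib

open Set Topology TopologicalSpace Pointwise

/-- `⋂ Z[I] = ⋂_{g ∈ I} Z(g)`, the intersection of the zero sets of members of `I`. -/
def zInter {X : Type*} [TopologicalSpace X] (I : Ideal C(X, ℝ)) : Set X :=
  {x | ∀ g ∈ I, g x = 0}

/-- `B_u(f, I, ε) = {g ∈ C(X) : sup_{x ∈ X} |f x - g x| < ε and f - g ∈ I}`. -/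
def uBall {X : Type*} [TopologicalSpace X] (I : Ideal C(X, ℝ)) (f : C(X, ℝ)) (ε : ℝ) :
    Set C(X, ℝ) :=
  {g | (∃ M, M < ε ∧ ∀ x, |f x - g x| ≤ M) ∧ f - g ∈ I}

/-- The `u^I`-topology on `C(X)`, with open base `{B_u(f, I, ε) : f ∈ C(X), ε > 0}`. -/
def uTopology {X : Type*} [TopologicalSpace X] (I : Ideal C(X, ℝ)) :
    TopologicalSpace C(X, ℝ) :=
  TopologicalSpace.generateFrom {B | ∃ f ε, 0 < ε ∧ B = uBall I f ε}

/-- `B_m(f, I, u) = {g ∈ C(X) : |f x - g x| < u x for all x ∈ X and f - g ∈ I}`. -/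
def mBall {X : Type*} [TopologicalSpace X] (I : Ideal C(X, ℝ)) (f u : C(X, ℝ)) :
    Set C(X, ℝ) :=
  {g | (∀ x, |f x - g x| < u x) ∧ f - g ∈ I}

/-- The `m^I`-topology on `C(X)`, with open base
`{B_m(f, I, u) : f ∈ C(X), u ∈ C₊(X)}`. -/
def mTopology {X : Type*} [TopologicalSpace X] (I : Ideal C(X, ℝ)) :
    TopologicalSpace C(X, ℝ) :=
  TopologicalSpace.generateFrom {B | ∃ f u, (∀ x, 0 < u x) ∧ B = mBall I f u}

/-- A subset `Y` of `X` is bounded if every `f ∈ C(X)` is bounded on `Y`. -/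
def BoundedOn {X : Type*} [TopologicalSpace X] (Y : Set X) : Prop :=
  ∀ f : C(X, ℝ), ∃ M : ℝ, ∀ x ∈ Y, |f x| ≤ M

/-- `X` is `I`-pseudocompact if `X ∖ ⋂ Z[I]` is a bounded subset of `X`. -/
def IPseudocompact {X : Type*} [TopologicalSpace X] (I : Ideal C(X, ℝ)) : Prop :=
  BoundedOn (zInter I)ᶜ

/-- A subset `S` of `X` is pseudocompact (as a subspace) if every continuous
real-valued function on the subspace `S` is bounded. -/
def PseudocompactOn {X : Type*} [TopologicalSpace X] (S : Set X) : Prop :=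
  ∀ g : C(S, ℝ), ∃ M : ℝ, ∀ y : S, |g y| ≤ M

/-!
In the `m^I`-topology a basic neighbourhood of `g` only contains functions `g + k` with `k ∈ I`,
so a compact set with nonempty interior contains `g + k` for every small enough `k ∈ I`.
If `X ∖ ⋂ Z[I]` is infinite, pick distinct points `x₀, x₁, …` in it and `kₙ ∈ I` with
`0 ≤ kₙ < v`, `kₙ(xₙ) = v(xₙ)/2` and `kₙ(xₘ) = 0` for `m < n`; the functions `g + kₙ` are pairwise
`v/2`-apart, so no finitely many balls of radius `v/4` cover them, contradicting compactness.
If `X ∖ ⋂ Z[I]` is finite, then `I` embeds into `ℝ^(X ∖ ⋂ Z[I])` by restriction, hence is finite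
dimensional, and on `I` the `m^I`-topology is the product topology at those finitely many points;
so the unit ball `{h ∈ I : |h| ≤ 1}` is compact, and it contains the neighbourhood `B_m(0, I, 1)`.
-/

section

variable {X : Type*} [TopologicalSpace X] (I : Ideal C(X, ℝ))

lemma mem_mBall_self {u : C(X, ℝ)} (hu : ∀ x, 0 < u x) (f : C(X, ℝ)) : f ∈ mBall I f u :=
  ⟨fun x => by simpa using hu x, by simp⟩

lemma exists_mBall_subset_mBall {f u g : C(X, ℝ)} (hg : g ∈ mBall I f u) :
    ∃ v : C(X, ℝ), (∀ x, 0 < v x) ∧ mBall I g v ⊆ mBall I f u := by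
  refine ⟨⟨fun x => u x - |f x - g x|, by fun_prop⟩, fun x => sub_pos.mpr (hg.1 x), ?_⟩
  rintro h ⟨hgh, hghI⟩
  refine ⟨fun x => ?_, by simpa using add_mem hg.2 hghI⟩
  have := hgh x
  simp only [ContinuousMap.coe_mk] at this
  linarith [abs_sub_le (f x) (g x) (h x)]

lemma isTopologicalBasis_mBall :
    @IsTopologicalBasis C(X, ℝ) (mTopology I) {B | ∃ f u, (∀ x, 0 < u x) ∧ B = mBall I f u} := by
  let := mTopology I
  refine ⟨?_, ?_, rfl⟩
  · rintro _ ⟨f₁, u₁, -, rfl⟩ _ ⟨f₂, u₂, -, rfl⟩ g ⟨hg₁, hg₂⟩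
    obtain ⟨v₁, hv₁, hsub₁⟩ := exists_mBall_subset_mBall I hg₁
    obtain ⟨v₂, hv₂, hsub₂⟩ := exists_mBall_subset_mBall I hg₂
    have hv : ∀ x, 0 < (v₁ ⊓ v₂) x := fun x => lt_min (hv₁ x) (hv₂ x)
    refine ⟨mBall I g (v₁ ⊓ v₂), ⟨g, _, hv, rfl⟩, mem_mBall_self I hv g, ?_⟩
    rintro h ⟨hgh, hghI⟩
    exact ⟨hsub₁ ⟨fun x => (hgh x).trans_le inf_le_left, hghI⟩,
      hsub₂ ⟨fun x => (hgh x).trans_le inf_le_right, hghI⟩⟩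
  · have h1 : ∀ x, (0 : ℝ) < (1 : C(X, ℝ)) x := fun _ => one_pos
    exact eq_univ_of_forall fun f => ⟨_, ⟨f, 1, h1, rfl⟩, mem_mBall_self I h1 f⟩

lemma isOpen_mBall {u : C(X, ℝ)} (hu : ∀ x, 0 < u x) (f : C(X, ℝ)) :
    IsOpen[mTopology I] (mBall I f u) :=
  isOpen_generateFrom_of_mem ⟨f, u, hu, rfl⟩

lemma exists_mBall_subset_of_isOpen {U : Set C(X, ℝ)} (hU : IsOpen[mTopology I] U) {g : C(X, ℝ)}
    (hg : g ∈ U) : ∃ v : C(X, ℝ), (∀ x, 0 < v x) ∧ mBall I g v ⊆ U := by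
  let := mTopology I
  obtain ⟨_, ⟨f, u, -, rfl⟩, hgB, hBU⟩ :=
    (isTopologicalBasis_mBall I).exists_subset_of_mem_open hg hU
  obtain ⟨v, hv, hsub⟩ := exists_mBall_subset_mBall I hgB
  exact ⟨v, hv, hsub.trans hBU⟩

lemma exists_lt_forall_abs_sub_lt_of_isCompact {K : Set C(X, ℝ)}
    (hK : @IsCompact _ (mTopology I) K) {u : C(X, ℝ)} (hu : ∀ x, 0 < u x) {h : ℕ → C(X, ℝ)}
    (hhK : ∀ n, h n ∈ K) : ∃ n m, n < m ∧ ∀ x, |h n x - h m x| < 2 * u x := by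
  let := mTopology I
  obtain ⟨T, hT⟩ := hK.elim_finite_subcover (fun p => mBall I p u) (fun p => isOpen_mBall I hu p)
    fun g _ => mem_iUnion.mpr ⟨g, mem_mBall_self I hu g⟩
  have hcenter : ∀ n, ∃ p ∈ T, h n ∈ mBall I p u := fun n => by simpa using hT (hhK n)
  choose P hPT hP using hcenter
  obtain ⟨n, -, m, -, hnm, hPnm⟩ :=
    infinite_univ.exists_lt_map_eq_of_mapsTo (fun n _ => hPT n) T.finite_toSet
  refine ⟨n, m, hnm, fun x => ?_⟩
  have hn := abs_lt.mp ((hP n).1 x)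
  have hm := abs_lt.mp ((hP m).1 x)
  rw [hPnm] at hn
  exact abs_lt.mpr ⟨by linarith, by linarith⟩

lemma exists_mem_ideal_eq_half {x : X} (hx : x ∉ zInter I) :
    ∃ e ∈ I, (∀ z, 0 ≤ e z ∧ e z < 1) ∧ e x = 1 / 2 := by
  obtain ⟨f, hfI, hfx⟩ : ∃ f ∈ I, f x ≠ 0 := by simpa [zInter] using hx
  have ha : 0 < f x ^ 2 := by positivity
  have hden : ∀ z, 0 < f z ^ 2 + f x ^ 2 := fun z => by positivity
  let q : C(X, ℝ) := ⟨fun z => f z / (f z ^ 2 + f x ^ 2),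
    (map_continuous f).div (by fun_prop) fun z => (hden z).ne'⟩
  have he : ∀ z, (f * q) z = f z ^ 2 / (f z ^ 2 + f x ^ 2) := fun z => by
    simp [q, mul_div_assoc', sq]
  refine ⟨f * q, I.mul_mem_right q hfI, fun z => ⟨?_, ?_⟩, ?_⟩
  · rw [he]; positivity
  · rw [he, div_lt_one (hden z)]; linarith
  · rw [he]; field_simp; ring

lemma exists_mem_ideal_bump [T35Space X] {x : X} (hx : x ∉ zInter I) {F : Set X}
    (hF : F.Finite) (hxF : x ∉ F) {v : C(X, ℝ)} (hv : ∀ z, 0 < v z) :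
    ∃ k ∈ I, (∀ z, 0 ≤ k z ∧ k z < v z) ∧ k x = v x / 2 ∧ ∀ y ∈ F, k y = 0 := by
  obtain ⟨ψ, hψ, hψx, hψF⟩ := CompletelyRegularSpace.completely_regular x F hF.isClosed hxF
  obtain ⟨e, heI, he, hex⟩ := exists_mem_ideal_eq_half I hx
  let φ : C(X, ℝ) := ⟨fun z => 1 - ψ z, by fun_prop⟩
  have hφ : ∀ z, 0 ≤ φ z ∧ φ z ≤ 1 := fun z =>
    ⟨sub_nonneg.mpr unitInterval.le_one', sub_le_self _ unitInterval.nonneg'⟩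
  refine ⟨φ * v * e, I.mul_mem_left _ heI, fun z => ⟨?_, ?_⟩, ?_, fun y hy => ?_⟩
  · exact mul_nonneg (mul_nonneg (hφ z).1 (hv z).le) (he z).1
  · simp only [ContinuousMap.mul_apply]
    nlinarith [mul_nonneg (sub_nonneg.mpr (hφ z).2) (mul_nonneg (hv z).le (he z).1),
      mul_pos (hv z) (sub_pos.mpr (he z).2)]
  · simp [φ, hψx, hex, div_eq_mul_inv]
  · simp [φ, hψF hy]

theorem interior_eq_empty_of_isCompact [T35Space X] (hY : (zInter I)ᶜ.Infinite)
    {K : Set C(X, ℝ)} (hK : @IsCompact _ (mTopology I) K) :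
    @interior _ (mTopology I) K = ∅ := by
  let := mTopology I
  by_contra hne
  obtain ⟨g, hg⟩ := nonempty_iff_ne_empty.mpr hne
  obtain ⟨v, hv, hgK⟩ := exists_mBall_subset_of_isOpen I isOpen_interior hg
  let x : ℕ → X := fun n => hY.natEmbedding _ n
  have hx_inj : x.Injective := fun n m h => (hY.natEmbedding _).injective (Subtype.ext h)
  have hbump : ∀ n, ∃ k ∈ I, (∀ z, 0 ≤ k z ∧ k z < v z) ∧ k (x n) = v (x n) / 2 ∧
      ∀ y ∈ x '' Iio n, k y = 0 := fun n =>
    exists_mem_ideal_bump I (hY.natEmbedding _ n).2 ((finite_Iio n).image x)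
      (fun ⟨m, hm, hmn⟩ => (hx_inj hmn ▸ hm : n < n).false) hv
  choose k hkI hkv hkx hk0 using hbump
  have hgkK : ∀ n, g + k n ∈ K := fun n => interior_subset <| hgK
    ⟨fun z => by simpa [abs_of_nonneg (hkv n z).1] using (hkv n z).2, by simpa using hkI n⟩
  have hu : ∀ z, 0 < ((4 : ℝ)⁻¹ • v) z := fun z => by simpa using hv z
  obtain ⟨n, m, hnm, hsep⟩ := exists_lt_forall_abs_sub_lt_of_isCompact I hK hu hgkK
  have := hsep (x n)
  simp only [ContinuousMap.add_apply, ContinuousMap.smul_apply, smul_eq_mul, hkx,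
    hk0 m (x n) (mem_image_of_mem x hnm)] at this
  rw [add_sub_add_left_eq_sub, sub_zero, abs_of_pos (half_pos (hv (x n)))] at this
  linarith

def restrictComplZInter : C(X, ℝ) →ₗ[ℝ] (↥(zInter I)ᶜ → ℝ) :=
  LinearMap.funLeft ℝ ℝ Subtype.val ∘ₗ ContinuousMap.coeFnLinearMap ℝ

lemma injective_restrictComplZInter_comp_subtype :
    Function.Injective (restrictComplZInter I ∘ₗ (I.restrictScalars ℝ).subtype) := by
  intro h₁ h₂ heq
  ext x
  by_cases hx : x ∈ zInter I
  · rw [hx _ h₁.2, hx _ h₂.2]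
  · exact congrFun heq ⟨x, hx⟩

lemma finiteDimensional_of_finite_compl_zInter (hY : (zInter I)ᶜ.Finite) :
    FiniteDimensional ℝ (I.restrictScalars ℝ) :=
  have : Finite ↥(zInter I)ᶜ := hY.to_subtype
  .of_injective _ (injective_restrictComplZInter_comp_subtype I)

lemma continuous_mTopology_of_finite {T : Type*} [TopologicalSpace T]
    (hY : (zInter I)ᶜ.Finite) {Θ : T → C(X, ℝ)} (hΘI : ∀ c, Θ c ∈ I)
    (hΘ : ∀ x, Continuous fun c => Θ c x) : Continuous[_, mTopology I] Θ := by
  refine continuous_generateFrom_iff.mpr ?_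
  rintro _ ⟨f, u, hu, rfl⟩
  by_cases hf : f ∈ I
  · have : Θ ⁻¹' mBall I f u = ⋂ y ∈ (zInter I)ᶜ, {c | |f y - Θ c y| < u y} := by
      ext c
      simp only [mem_preimage, mem_iInter, mem_ofPred_eq]
      refine ⟨fun hc y _ => hc.1 y, fun hc => ⟨fun z => ?_, I.sub_mem hf (hΘI c)⟩⟩
      by_cases hz : z ∈ zInter I
      · simpa [hz f hf, hz _ (hΘI c)] using hu z
      · exact hc z hz
    rw [this]
    exact hY.isOpen_biInter fun y _ =>
      isOpen_lt (continuous_const.sub (hΘ y)).abs continuous_const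
  · convert isOpen_empty
    refine eq_empty_of_forall_notMem fun c hc => hf ?_
    simpa using add_mem hc.2 (hΘI c)

theorem isCompact_setOf_mem_ideal_abs_le_one (hY : (zInter I)ᶜ.Finite) :
    @IsCompact _ (mTopology I) {h | h ∈ I ∧ ∀ x, |h x| ≤ 1} := by
  have : Finite ↥(zInter I)ᶜ := hY.to_subtype
  let V := I.restrictScalars ℝ
  have := finiteDimensional_of_finite_compl_zInter I hY
  let b := Module.finBasis ℝ V
  let Θ : (Fin (Module.finrank ℝ V) → ℝ) →ₗ[ℝ] C(X, ℝ) := V.subtype ∘ₗ b.equivFun.symm.toLinearMap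
  have hΘI : ∀ c, Θ c ∈ I := fun c => (b.equivFun.symm c).2
  let A := restrictComplZInter I ∘ₗ Θ
  have hA : IsClosedEmbedding A :=
    LinearMap.isClosedEmbedding_of_injective <| LinearMap.ker_eq_bot.mpr <|
      (injective_restrictComplZInter_comp_subtype I).comp b.equivFun.symm.injective
  have hS : IsCompact (A ⁻¹' univ.pi fun _ => Icc (-1) 1) :=
    hA.isCompact_preimage (isCompact_univ_pi fun _ => isCompact_Icc)
  have hΘ : ∀ x, Continuous fun c => Θ c x := fun x => by
    simp only [Θ, LinearMap.comp_apply, LinearEquiv.coe_coe, Module.Basis.equivFun_symm_apply,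
      Submodule.subtype_apply, Submodule.coe_sum, Submodule.coe_smul, ContinuousMap.coe_sum]
    fun_prop
  let := mTopology I
  convert hS.image (continuous_mTopology_of_finite I hY hΘI hΘ)
  ext h
  constructor
  · rintro ⟨hI, hh⟩
    refine ⟨b.equivFun ⟨h, hI⟩, fun y _ => abs_le.mp ?_, by simp [Θ]⟩
    simpa [A, Θ, restrictComplZInter] using hh y
  · rintro ⟨c, hc, rfl⟩
    refine ⟨hΘI c, fun x => ?_⟩
    by_cases hx : x ∈ zInter I
    · simp [hx _ (hΘI c)]
    · exact abs_le.mpr (hc ⟨x, hx⟩ (mem_univ _))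

lemma mBall_zero_one_subset :
    mBall I 0 1 ⊆ {h | h ∈ I ∧ ∀ x, |h x| ≤ 1} := fun h ⟨hh, hI⟩ =>
  ⟨by simpa using hI, fun x => by simpa using (hh x).le⟩

end

/-- `X ∖ ⋂ Z[I]` is infinite if and only if every compact subset of
`C(X)` with the `m^I`-topology has empty interior. -/
theorem stmt_15 {X : Type*} [TopologicalSpace X] [T35Space X] (I : Ideal C(X, ℝ)) :
    (zInter I)ᶜ.Infinite ↔
      ∀ K : Set C(X, ℝ), @IsCompact C(X, ℝ) (mTopology I) K →
        @interior C(X, ℝ) (mTopology I) K = ∅ := by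
  refine ⟨fun hY K hK => interior_eq_empty_of_isCompact I hY hK, fun h => ?_⟩
  by_contra hY
  have hK := isCompact_setOf_mem_ideal_abs_le_one I (not_infinite.mp hY)
  have h1 : ∀ x, (0 : ℝ) < (1 : C(X, ℝ)) x := fun _ => one_pos
  let := mTopology I
  have hint : (0 : C(X, ℝ)) ∈ interior {h | h ∈ I ∧ ∀ x, |h x| ≤ 1} :=
    interior_maximal (mBall_zero_one_subset I) (isOpen_mBall I h1 0) (mem_mBall_self I h1 0)
  simp [h _ hK] at hint
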